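/- Let G = (V,E) be a finite connected simple graph with at least one edge. Then MEO(Γ_G) · Mod₂(Γ_G) = 1. Moreover, if ρ* is an admissible density attaining Mod₂(Γ_G) and μ* is an MEO-optimal pmf, then η_{μ*}(e) = ρ*(e)/Mod₂(Γ_G) for every e ∈ E, and μ*(γ)(1 − ∑_{e∈γ} ρ*(e)) = 0 for every spanning tree γ ∈ Γ_G. -/

import Mathlib

noncomputable section
open scoped Classical
open Finset

variable {V : Type*} [Fintype V] [DecidableEq V]

/-- A pmf on a finite family `Γ` of edge sets. -/
def IsPmf (Γ : Finset (Finset (Sym2 V))) (μ : Finset (Sym2 V) → ℝ) : Prop :=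
  (∀ γ, 0 ≤ μ γ) ∧ (∀ γ, γ ∉ Γ → μ γ = 0) ∧ ∑ γ ∈ Γ, μ γ = 1

/-- Edge usage probability. -/
def eta (Γ : Finset (Finset (Sym2 V))) (μ : Finset (Sym2 V) → ℝ) (e : Sym2 V) : ℝ :=
  ∑ γ ∈ Γ.filter (fun γ => e ∈ γ), μ γ

/-- Expected overlap. -/
def EO (Γ : Finset (Finset (Sym2 V))) (μ : Finset (Sym2 V) → ℝ) : ℝ :=
  ∑ γ ∈ Γ, ∑ γ' ∈ Γ, ((γ ∩ γ').card : ℝ) * μ γ * μ γ'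

/-- Minimum expected overlap. -/
def MEO (Γ : Finset (Finset (Sym2 V))) : ℝ :=
  sInf {x : ℝ | ∃ μ, IsPmf Γ μ ∧ x = EO Γ μ}

/-- The set of spanning trees of `G`, as finsets of edges. -/
def spanningTrees (G : SimpleGraph V) : Finset (Finset (Sym2 V)) :=
  Finset.univ.filter (fun γ => ↑γ ⊆ G.edgeSet ∧
    (SimpleGraph.fromEdgeSet (↑γ : Set (Sym2 V))).Connected ∧
    γ.card = Fintype.card V - 1)

/-- Edges of `G` with both endpoints in `W`. -/
def edgesWithin (G : SimpleGraph V) (W : Finset V) : Finset (Sym2 V) :=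
  G.edgeFinset.filter (fun e => ∀ v ∈ e, v ∈ W)

/-- `γ` is a spanning tree of the subgraph of `G` induced by the vertex set `W`. -/
def IsSpanningTreeOn (G : SimpleGraph V) (W : Finset V) (γ : Finset (Sym2 V)) : Prop :=
  γ ⊆ edgesWithin G W ∧
    ((SimpleGraph.fromEdgeSet (↑γ : Set (Sym2 V))).induce (↑W : Set V)).Connected ∧
    γ.card = W.card - 1

def spanningTreesOn (G : SimpleGraph V) (W : Finset V) : Finset (Finset (Sym2 V)) :=
  Finset.univ.filter (IsSpanningTreeOn G W)

def Adm (Γ : Finset (Finset (Sym2 V))) (ρ : Sym2 V → ℝ) : Prop :=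
  (∀ e, 0 ≤ ρ e) ∧ ∀ γ ∈ Γ, 1 ≤ ∑ e ∈ γ, ρ e

def Mod2 (Eset : Finset (Sym2 V)) (Γ : Finset (Finset (Sym2 V))) : ℝ :=
  sInf {x : ℝ | ∃ ρ, Adm Γ ρ ∧ x = ∑ e ∈ Eset, (ρ e) ^ 2}

/-- A fair spanning tree. -/
def IsFair (G : SimpleGraph V) (γ : Finset (Sym2 V)) : Prop :=
  ∃ μ, IsPmf (spanningTrees G) μ ∧ EO (spanningTrees G) μ = MEO (spanningTrees G) ∧ 0 < μ γ

def IsFeasiblePartition (G : SimpleGraph V) (P : Finset (Finset V)) : Prop :=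
  2 ≤ P.card ∧ (∀ p ∈ P, p.Nonempty) ∧ (∀ v : V, ∃! p, p ∈ P ∧ v ∈ p) ∧
    ∀ p ∈ P, (G.induce (↑p : Set V)).Connected

/-- The edges of `G` joining distinct parts of the partition `P`. -/
def cutEdges (G : SimpleGraph V) (P : Finset (Finset V)) : Finset (Sym2 V) :=
  G.edgeFinset.filter (fun e => ¬ ∃ p ∈ P, ∀ v ∈ e, v ∈ p)

/-- `G` is homogeneous. -/
def IsHomogeneous (G : SimpleGraph V) : Prop :=
  ∃ μ, IsPmf (spanningTrees G) μ ∧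
    ∃ c : ℝ, ∀ e ∈ G.edgeFinset, eta (spanningTrees G) μ e = c

/-!
Writing `η` for the edge usage of a pmf `μ`, the expected overlap is `∑ₑ η(e)²`, and for an
admissible `ρ` one has `∑ₑ ρ(e) η(e) = ∑_γ μ(γ) ρ(γ) ≥ 1`; Cauchy–Schwarz gives
`EO(μ) · ∑ₑ ρ(e)² ≥ 1` for all admissible `ρ` and all pmfs `μ`. Conversely, for a minimizer `μ*`
of the (convex, quadratic) expected overlap, the first-order condition against point masses says
`∑_{e∈γ} η*(e) ≥ EO(μ*)` for every `γ`, i.e. `η*/EO(μ*)` is admissible; its energy is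
`1/EO(μ*)`, so equality holds. When `EO(μ) · M = 1` with `M = ∑ ρ²`, the identity
`∑ₑ (M η(e) - ρ(e))² = 2M (1 - ∑ₑ ρ(e) η(e)) ≤ 0` forces `η = ρ/M` and `∑ₑ ρ(e) η(e) = 1`, i.e.
`∑_γ μ(γ)(ρ(γ) - 1) = 0` with nonnegative terms.
-/

section Duality

open Filter Topology

variable {α : Type*} {Γ : Finset (Finset (Sym2 α))} {Es : Finset (Sym2 α)}
  {μ ν : Finset (Sym2 α) → ℝ} {ρ : Sym2 α → ℝ}

theorem IsPmf.le_one (hμ : IsPmf Γ μ) (γ : Finset (Sym2 α)) : μ γ ≤ 1 := by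
  by_cases hγ : γ ∈ Γ
  · exact hμ.2.2 ▸ single_le_sum (fun γ' _ => hμ.1 γ') hγ
  · rw [hμ.2.1 γ hγ]
    exact zero_le_one

theorem IsPmf.mix (hμ : IsPmf Γ μ) (hν : IsPmf Γ ν) {t : ℝ} (ht₀ : 0 ≤ t) (ht₁ : t ≤ 1) :
    IsPmf Γ (fun γ => (1 - t) * μ γ + t * ν γ) := by
  refine ⟨fun γ => ?_, fun γ hγ => ?_, ?_⟩
  · exact add_nonneg (mul_nonneg (sub_nonneg.2 ht₁) (hμ.1 γ)) (mul_nonneg ht₀ (hν.1 γ))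
  · simp only [hμ.2.1 γ hγ, hν.2.1 γ hγ, mul_zero, add_zero]
  · rw [sum_add_distrib, ← mul_sum, ← mul_sum, hμ.2.2, hν.2.2]
    ring

theorem isPmf_indicator {γ₀ : Finset (Sym2 α)} (hγ₀ : γ₀ ∈ Γ) :
    IsPmf Γ (fun γ => if γ = γ₀ then 1 else 0) := by
  refine ⟨fun γ => by positivity, fun γ hγ => if_neg (ne_of_mem_of_not_mem hγ₀ hγ).symm, ?_⟩
  rw [sum_ite_eq' Γ γ₀, if_pos hγ₀]

theorem isCompact_setOf_isPmf (Γ : Finset (Finset (Sym2 α))) :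
    IsCompact {μ | IsPmf Γ μ} := by
  have hclosed : IsClosed {μ : Finset (Sym2 α) → ℝ | IsPmf Γ μ} := by
    simp only [IsPmf, Set.ofPred_and, Set.ofPred_forall]
    refine (isClosed_iInter fun γ => isClosed_le continuous_const (continuous_apply γ)).inter
      ((isClosed_iInter fun γ => isClosed_iInter fun _ =>
        isClosed_eq (continuous_apply γ) continuous_const).inter
      (isClosed_eq (continuous_finsetSum _ fun γ _ => continuous_apply γ) continuous_const))
  exact (isCompact_univ_pi fun _ => isCompact_Icc).of_isClosed_subset hclosed
    fun μ hμ γ _ => ⟨hμ.1 γ, hμ.le_one γ⟩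

variable [DecidableEq α]

theorem continuous_EO (Γ : Finset (Finset (Sym2 α))) : Continuous (EO Γ) :=
  continuous_finsetSum _ fun γ _ => continuous_finsetSum _ fun γ' _ =>
    (continuous_const.mul (continuous_apply γ)).mul (continuous_apply γ')

theorem exists_isMinOn_EO (hΓ : Γ.Nonempty) :
    ∃ μ, IsPmf Γ μ ∧ IsMinOn (EO Γ) {ν | IsPmf Γ ν} μ :=
  (isCompact_setOf_isPmf Γ).exists_isMinOn ⟨_, isPmf_indicator hΓ.choose_spec⟩
    (continuous_EO Γ).continuousOn

theorem eta_mix (a b : ℝ) (μ ν : Finset (Sym2 α) → ℝ) (e : Sym2 α) :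
    eta Γ (fun γ => a * μ γ + b * ν γ) e = a * eta Γ μ e + b * eta Γ ν e := by
  simp only [eta, sum_add_distrib, mul_sum]

theorem sum_mul_eta_eq_sum_mul_sum_inter (Es : Finset (Sym2 α)) (ρ : Sym2 α → ℝ)
    (μ : Finset (Sym2 α) → ℝ) :
    ∑ e ∈ Es, ρ e * eta Γ μ e = ∑ γ ∈ Γ, μ γ * ∑ e ∈ Es ∩ γ, ρ e := by
  simp only [eta, sum_filter, mul_sum, mul_ite, mul_zero]
  rw [sum_comm]
  refine sum_congr rfl fun γ _ => ?_
  rw [← sum_filter, filter_mem_eq_inter]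
  exact sum_congr rfl fun e _ => mul_comm _ _

theorem sum_mul_eta (hsub : ∀ γ ∈ Γ, γ ⊆ Es) (ρ : Sym2 α → ℝ) (μ : Finset (Sym2 α) → ℝ) :
    ∑ e ∈ Es, ρ e * eta Γ μ e = ∑ γ ∈ Γ, μ γ * ∑ e ∈ γ, ρ e := by
  rw [sum_mul_eta_eq_sum_mul_sum_inter]
  exact sum_congr rfl fun γ hγ => by rw [inter_eq_right.2 (hsub γ hγ)]

theorem EO_eq_sum_sq_eta (hsub : ∀ γ ∈ Γ, γ ⊆ Es) (μ : Finset (Sym2 α) → ℝ) :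
    EO Γ μ = ∑ e ∈ Es, eta Γ μ e ^ 2 := by
  have hoverlap : ∀ γ, ∑ e ∈ γ, eta Γ μ e = ∑ γ' ∈ Γ, μ γ' * (γ ∩ γ').card := fun γ => by
    simpa using sum_mul_eta_eq_sum_mul_sum_inter (Γ := Γ) γ (fun _ => 1) μ
  simp only [sq, sum_mul_eta hsub, hoverlap, EO, mul_sum]
  exact sum_congr rfl fun γ _ => sum_congr rfl fun γ' _ => by ring

theorem EO_mix (hsub : ∀ γ ∈ Γ, γ ⊆ Es) (μ ν : Finset (Sym2 α) → ℝ) (t : ℝ) :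
    EO Γ (fun γ => (1 - t) * μ γ + t * ν γ) = EO Γ μ +
      (2 * (∑ e ∈ Es, eta Γ μ e * eta Γ ν e - EO Γ μ) * t +
        (∑ e ∈ Es, (eta Γ ν e - eta Γ μ e) ^ 2) * t ^ 2) := by
  rw [EO_eq_sum_sq_eta hsub, EO_eq_sum_sq_eta hsub, ← sum_sub_distrib, mul_sum, sum_mul, sum_mul,
    ← sum_add_distrib, ← sum_add_distrib]
  exact sum_congr rfl fun e _ => by rw [eta_mix]; ring

theorem nonneg_of_forall_mul_add_mul_sq_nonneg {a b : ℝ}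
    (h : ∀ t ∈ Set.Ioc (0 : ℝ) 1, 0 ≤ a * t + b * t ^ 2) : 0 ≤ a := by
  have hlim : Tendsto (fun t => a + b * t) (𝓝[>] 0) (𝓝 a) :=
    ((by fun_prop : Continuous fun t : ℝ => a + b * t).tendsto' 0 a (by simp)).mono_left
      nhdsWithin_le_nhds
  refine ge_of_tendsto hlim ?_
  filter_upwards [Ioc_mem_nhdsGT one_pos] with t ht
  refine nonneg_of_mul_nonneg_right ?_ ht.1
  linarith [h t ht]

theorem EO_le_sum_mul_eta_of_isMinOn (hsub : ∀ γ ∈ Γ, γ ⊆ Es)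
    (hmin : IsMinOn (EO Γ) {ν | IsPmf Γ ν} μ) (hμ : IsPmf Γ μ) (hν : IsPmf Γ ν) :
    EO Γ μ ≤ ∑ e ∈ Es, eta Γ μ e * eta Γ ν e := by
  suffices h : 0 ≤ 2 * (∑ e ∈ Es, eta Γ μ e * eta Γ ν e - EO Γ μ) by linarith
  refine nonneg_of_forall_mul_add_mul_sq_nonneg (b := ∑ e ∈ Es, (eta Γ ν e - eta Γ μ e) ^ 2)
    fun t ht => ?_
  have := hmin (hμ.mix hν ht.1.le ht.2)
  rw [Set.mem_ofPred_eq, EO_mix hsub] at this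
  linarith

theorem EO_le_sum_eta_of_isMinOn (hsub : ∀ γ ∈ Γ, γ ⊆ Es)
    (hmin : IsMinOn (EO Γ) {ν | IsPmf Γ ν} μ) (hμ : IsPmf Γ μ) {γ₀ : Finset (Sym2 α)}
    (hγ₀ : γ₀ ∈ Γ) : EO Γ μ ≤ ∑ e ∈ γ₀, eta Γ μ e := by
  simpa [sum_mul_eta hsub, hγ₀] using
    EO_le_sum_mul_eta_of_isMinOn hsub hmin hμ (isPmf_indicator hγ₀)

theorem one_le_sum_mul_eta (hsub : ∀ γ ∈ Γ, γ ⊆ Es) (hρ : Adm Γ ρ) (hμ : IsPmf Γ μ) :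
    1 ≤ ∑ e ∈ Es, ρ e * eta Γ μ e := by
  rw [sum_mul_eta hsub, ← hμ.2.2]
  exact sum_le_sum fun γ hγ => le_mul_of_one_le_right (hμ.1 γ) (hρ.2 γ hγ)

theorem one_le_EO_mul_sum_sq (hsub : ∀ γ ∈ Γ, γ ⊆ Es) (hρ : Adm Γ ρ) (hμ : IsPmf Γ μ) :
    1 ≤ EO Γ μ * ∑ e ∈ Es, ρ e ^ 2 :=
  calc 1 ≤ (∑ e ∈ Es, ρ e * eta Γ μ e) ^ 2 := one_le_pow₀ (one_le_sum_mul_eta hsub hρ hμ)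
    _ ≤ (∑ e ∈ Es, ρ e ^ 2) * ∑ e ∈ Es, eta Γ μ e ^ 2 := sum_mul_sq_le_sq_mul_sq _ _ _
    _ = EO Γ μ * ∑ e ∈ Es, ρ e ^ 2 := by rw [EO_eq_sum_sq_eta hsub, mul_comm]

theorem eta_nonneg (hμ : IsPmf Γ μ) (e : Sym2 α) : 0 ≤ eta Γ μ e :=
  sum_nonneg fun γ _ => hμ.1 γ

theorem EO_nonneg (hsub : ∀ γ ∈ Γ, γ ⊆ Es) (μ : Finset (Sym2 α) → ℝ) : 0 ≤ EO Γ μ :=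
  EO_eq_sum_sq_eta hsub μ ▸ sum_nonneg fun _ _ => sq_nonneg _

theorem EO_pos (hsub : ∀ γ ∈ Γ, γ ⊆ Es) (hne : ∀ γ ∈ Γ, γ.Nonempty) (hμ : IsPmf Γ μ) :
    0 < EO Γ μ := by
  have hadm : Adm Γ (fun _ => 1) :=
    ⟨fun _ => zero_le_one, fun γ hγ => by simpa using (hne γ hγ).card_pos⟩
  exact pos_of_mul_pos_left (one_pos.trans_le (one_le_EO_mul_sum_sq hsub hadm hμ))
    (sum_nonneg fun _ _ => sq_nonneg _)

theorem MEO_eq_EO_of_isMinOn (hmin : IsMinOn (EO Γ) {ν | IsPmf Γ ν} μ) (hμ : IsPmf Γ μ) :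
    MEO Γ = EO Γ μ :=
  IsLeast.csInf_eq ⟨⟨μ, hμ, rfl⟩, by rintro _ ⟨ν, hν, rfl⟩; exact hmin hν⟩

theorem Mod2_eq_inv_EO_of_isMinOn (hsub : ∀ γ ∈ Γ, γ ⊆ Es) (hne : ∀ γ ∈ Γ, γ.Nonempty)
    (hmin : IsMinOn (EO Γ) {ν | IsPmf Γ ν} μ) (hμ : IsPmf Γ μ) :
    Mod2 Es Γ = (EO Γ μ)⁻¹ := by
  have hpos := EO_pos hsub hne hμ
  have hadm : Adm Γ (fun e => eta Γ μ e / EO Γ μ) := by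
    refine ⟨fun e => div_nonneg (eta_nonneg hμ e) hpos.le, fun γ hγ => ?_⟩
    rw [← sum_div, one_le_div hpos]
    exact EO_le_sum_eta_of_isMinOn hsub hmin hμ hγ
  have henergy : ∑ e ∈ Es, (eta Γ μ e / EO Γ μ) ^ 2 = (EO Γ μ)⁻¹ := by
    simp only [div_pow, ← sum_div, ← EO_eq_sum_sq_eta hsub]
    field_simp
  refine IsLeast.csInf_eq ⟨⟨_, hadm, henergy.symm⟩, ?_⟩
  rintro _ ⟨ρ, hρ, rfl⟩
  exact (inv_le_iff_one_le_mul₀' hpos).2 (one_le_EO_mul_sum_sq hsub hρ hμ)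

theorem MEO_mul_Mod2_eq_one (hsub : ∀ γ ∈ Γ, γ ⊆ Es) (hne : ∀ γ ∈ Γ, γ.Nonempty)
    (hΓ : Γ.Nonempty) : MEO Γ * Mod2 Es Γ = 1 := by
  obtain ⟨μ, hμ, hmin⟩ := exists_isMinOn_EO hΓ
  rw [MEO_eq_EO_of_isMinOn hmin hμ, Mod2_eq_inv_EO_of_isMinOn hsub hne hmin hμ]
  exact mul_inv_cancel₀ (EO_pos hsub hne hμ).ne'

theorem sum_sq_mul_eta_sub (hsub : ∀ γ ∈ Γ, γ ⊆ Es) (ρ : Sym2 α → ℝ)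
    (μ : Finset (Sym2 α) → ℝ) (c : ℝ) :
    ∑ e ∈ Es, (c * eta Γ μ e - ρ e) ^ 2 =
      c ^ 2 * EO Γ μ - 2 * c * ∑ e ∈ Es, ρ e * eta Γ μ e + ∑ e ∈ Es, ρ e ^ 2 := by
  rw [EO_eq_sum_sq_eta hsub, mul_sum, mul_sum, ← sum_sub_distrib, ← sum_add_distrib]
  exact sum_congr rfl fun e _ => by ring

theorem sum_sq_mul_eta_sub_eq_of_EO_mul_sum_sq_eq_one (hsub : ∀ γ ∈ Γ, γ ⊆ Es)
    (hgap : EO Γ μ * ∑ e ∈ Es, ρ e ^ 2 = 1) :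
    ∑ e ∈ Es, ((∑ e ∈ Es, ρ e ^ 2) * eta Γ μ e - ρ e) ^ 2 =
      2 * (∑ e ∈ Es, ρ e ^ 2) * (1 - ∑ e ∈ Es, ρ e * eta Γ μ e) := by
  rw [sum_sq_mul_eta_sub hsub]
  linear_combination (∑ e ∈ Es, ρ e ^ 2) * hgap

theorem sum_sq_pos_of_EO_mul_sum_sq_eq_one (hsub : ∀ γ ∈ Γ, γ ⊆ Es)
    (hgap : EO Γ μ * ∑ e ∈ Es, ρ e ^ 2 = 1) : 0 < ∑ e ∈ Es, ρ e ^ 2 :=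
  pos_of_mul_pos_right (hgap ▸ one_pos) (EO_nonneg hsub μ)

theorem sum_mul_eta_eq_one_of_EO_mul_sum_sq_eq_one (hsub : ∀ γ ∈ Γ, γ ⊆ Es) (hρ : Adm Γ ρ)
    (hμ : IsPmf Γ μ) (hgap : EO Γ μ * ∑ e ∈ Es, ρ e ^ 2 = 1) :
    ∑ e ∈ Es, ρ e * eta Γ μ e = 1 := by
  have hsq := sum_sq_mul_eta_sub_eq_of_EO_mul_sum_sq_eq_one hsub hgap
  have hM := sum_sq_pos_of_EO_mul_sum_sq_eq_one hsub hgap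
  have hnonneg : 0 ≤ 2 * (∑ e ∈ Es, ρ e ^ 2) * (1 - ∑ e ∈ Es, ρ e * eta Γ μ e) :=
    hsq ▸ sum_nonneg fun _ _ => sq_nonneg _
  have hle : ∑ e ∈ Es, ρ e * eta Γ μ e ≤ 1 := by
    nlinarith
  exact hle.antisymm (one_le_sum_mul_eta hsub hρ hμ)

theorem eta_eq_div_of_EO_mul_sum_sq_eq_one (hsub : ∀ γ ∈ Γ, γ ⊆ Es) (hρ : Adm Γ ρ)
    (hμ : IsPmf Γ μ) (hgap : EO Γ μ * ∑ e ∈ Es, ρ e ^ 2 = 1) {e : Sym2 α} (he : e ∈ Es) :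
    eta Γ μ e = ρ e / ∑ e ∈ Es, ρ e ^ 2 := by
  have hsq := sum_sq_mul_eta_sub_eq_of_EO_mul_sum_sq_eq_one hsub hgap
  rw [sum_mul_eta_eq_one_of_EO_mul_sum_sq_eq_one hsub hρ hμ hgap, sub_self, mul_zero,
    sum_eq_zero_iff_of_nonneg fun _ _ => sq_nonneg _] at hsq
  rw [eq_div_iff (sum_sq_pos_of_EO_mul_sum_sq_eq_one hsub hgap).ne', mul_comm]
  exact sub_eq_zero.1 (pow_eq_zero_iff two_ne_zero |>.1 (hsq e he))

theorem mul_one_sub_sum_eq_zero_of_sum_mul_eta_eq_one (hsub : ∀ γ ∈ Γ, γ ⊆ Es)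
    (hρ : Adm Γ ρ) (hμ : IsPmf Γ μ) (hs : ∑ e ∈ Es, ρ e * eta Γ μ e = 1) {γ : Finset (Sym2 α)}
    (hγ : γ ∈ Γ) : μ γ * (1 - ∑ e ∈ γ, ρ e) = 0 := by
  have hslack : ∑ γ ∈ Γ, μ γ * (∑ e ∈ γ, ρ e - 1) = 0 := by
    simp only [mul_sub, mul_one, sum_sub_distrib, ← sum_mul_eta hsub, hs, hμ.2.2, sub_self]
  rw [sum_eq_zero_iff_of_nonneg fun γ hγ => mul_nonneg (hμ.1 γ) (sub_nonneg.2 (hρ.2 γ hγ))]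
    at hslack
  linear_combination -hslack γ hγ

end Duality

section SpanningTrees

variable {G : SimpleGraph V}

theorem subset_edgeFinset_of_mem_spanningTrees {γ : Finset (Sym2 V)}
    (hγ : γ ∈ spanningTrees G) : γ ⊆ G.edgeFinset := fun _ he =>
  G.mem_edgeFinset.2 ((mem_filter.1 hγ).2.1 he)

theorem nonempty_of_mem_spanningTrees (hE : G.edgeFinset.Nonempty) {γ : Finset (Sym2 V)}
    (hγ : γ ∈ spanningTrees G) : γ.Nonempty := by
  have hV : 1 < Fintype.card V := by
    obtain ⟨e, he⟩ := hE
    induction e using Sym2.ind with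
    | _ u v => exact Fintype.one_lt_card_iff.2 ⟨u, v, (G.mem_edgeFinset.1 he).ne⟩
  rw [← card_pos, (mem_filter.1 hγ).2.2.2]
  omega

theorem spanningTrees_nonempty (hG : G.Connected) : (spanningTrees G).Nonempty := by
  obtain ⟨T, hTG, hT⟩ := hG.exists_isTree_le
  refine ⟨T.edgeFinset, mem_filter.2 ⟨mem_univ _, ?_, ?_, ?_⟩⟩
  · simpa using SimpleGraph.edgeSet_mono hTG
  · simpa using hT.connected
  · have := hT.card_edgeFinset
    omega

end SpanningTrees

/-- `MEO(Γ_G) · Mod₂(Γ_G) = 1`; moreover, for any admissible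
density attaining `Mod₂(Γ_G)` and any MEO-optimal pmf, `η_{μ*} = ρ*/Mod₂(Γ_G)`
on `E` and the complementary slackness condition holds. -/
theorem meo_mod2_duality
    {V : Type*} [Fintype V] [DecidableEq V]
    (G : SimpleGraph V) (hG : G.Connected) (hE : G.edgeFinset.Nonempty) :
    MEO (spanningTrees G) * Mod2 G.edgeFinset (spanningTrees G) = 1 ∧
    ∀ ρ : Sym2 V → ℝ, Adm (spanningTrees G) ρ →
      (∑ e ∈ G.edgeFinset, (ρ e) ^ 2) = Mod2 G.edgeFinset (spanningTrees G) →
      ∀ μ, IsPmf (spanningTrees G) μ → EO (spanningTrees G) μ = MEO (spanningTrees G) →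
        (∀ e ∈ G.edgeFinset,
          eta (spanningTrees G) μ e = ρ e / Mod2 G.edgeFinset (spanningTrees G)) ∧
        (∀ γ ∈ spanningTrees G, μ γ * (1 - ∑ e ∈ γ, ρ e) = 0) := by
  have hsub : ∀ γ ∈ spanningTrees G, γ ⊆ G.edgeFinset := fun _ =>
    subset_edgeFinset_of_mem_spanningTrees
  have hduality := MEO_mul_Mod2_eq_one hsub (fun _ => nonempty_of_mem_spanningTrees hE)
    (spanningTrees_nonempty hG)
  refine ⟨hduality, fun ρ hρ hρM μ hμ hμM => ?_⟩
  have hgap : EO (spanningTrees G) μ * ∑ e ∈ G.edgeFinset, ρ e ^ 2 = 1 := by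
    rw [hμM, hρM, hduality]
  refine ⟨fun e he => hρM ▸ eta_eq_div_of_EO_mul_sum_sq_eq_one hsub hρ hμ hgap he,
    fun γ => mul_one_sub_sum_eq_zero_of_sum_mul_eta_eq_one hsub hρ hμ
      (sum_mul_eta_eq_one_of_EO_mul_sum_sq_eq_one hsub hρ hμ hgap)⟩
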